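/- For every numeric term t ∈ T^ω and every parameter assignment σ, the term σ(t) has a unique normal form under the rewrite system R(F̂_ω), and this normal form is a numeral s^β(0̄) for some β ∈ ℕ. -/

import Mathlib

namespace Schematic

/-- Numeric terms `T^ω`: built from `0̄`, parameters (indexed by `ℕ`), the successor `s`, and
defined numeric function symbols `f̂ ∈ F̂_ω` (the symbol type `F`), where `f̂ ∈ F` has arity
`ar f + 1`. -/
inductive NTerm (F : Type) (ar : F → ℕ) : Type where
  | zero : NTerm F ar
  | param : ℕ → NTerm F ar
  | succ : NTerm F ar → NTerm F ar
  | defd : (f : F) → (Fin (ar f + 1) → NTerm F ar) → NTerm F ar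

namespace NTerm

variable {F : Type} {ar : F → ℕ}

/-- The numeral `s^β(0̄)`. -/
def ofNat (F : Type) (ar : F → ℕ) : ℕ → NTerm F ar
  | 0 => zero
  | n + 1 => succ (ofNat F ar n)

/-- Homomorphic substitution of parameters. -/
def subst (σ : ℕ → NTerm F ar) : NTerm F ar → NTerm F ar
  | zero => zero
  | param n => σ n
  | succ t => succ (t.subst σ)
  | defd f ts => defd f fun i => (ts i).subst σ

/-- The parameter `n` occurs in the term. -/
def HasParam (n : ℕ) : NTerm F ar → Prop
  | zero => False
  | param m => m = n
  | succ t => t.HasParam n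
  | defd _ ts => ∃ i, (ts i).HasParam n

/-- The defined symbol `g` occurs in the term. -/
def HasSymb (g : F) : NTerm F ar → Prop
  | zero => False
  | param _ => False
  | succ t => t.HasSymb g
  | defd f ts => f = g ∨ ∃ i, (ts i).HasSymb g

/-- The term contains no defined function symbols (i.e. it belongs to `T^ω₀`). -/
def NoDefd : NTerm F ar → Prop
  | zero => True
  | param _ => True
  | succ t => t.NoDefd
  | defd _ _ => False

/-- The term is a numeral `s^β(0̄)`. -/
def IsNumeral : NTerm F ar → Prop
  | zero => True
  | param _ => False
  | succ t => t.IsNumeral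
  | defd _ _ => False

/-- Evaluation of defined-symbol-free numeric terms under a parameter assignment
(junk value `0` on defined symbols). -/
def eval0 (σ : ℕ → ℕ) : NTerm F ar → ℕ
  | zero => 0
  | param n => σ n
  | succ t => t.eval0 σ + 1
  | defd _ _ => 0

end NTerm

variable {F : Type} {ar : F → ℕ}

/-- The substitution sending parameter `n < k` to `ts n` and fixing all other parameters. -/
def cutSub (k : ℕ) (ts : Fin k → NTerm F ar) : ℕ → NTerm F ar := fun n =>
  if h : n < k then ts ⟨n, h⟩ else NTerm.param n

/-- Like `cutSub` but additionally sending the parameter `k` (the recursion parameter `m`)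
to `u`. -/
def cutSub2 (k : ℕ) (ts : Fin k → NTerm F ar) (u : NTerm F ar) : ℕ → NTerm F ar := fun n =>
  if h : n < k then ts ⟨n, h⟩ else if n = k then u else NTerm.param n

/-- Like `cutSub2` but additionally sending parameter `k + 1` (the placeholder `k` for the
recursive call) to `recc`. -/
def stepSub (k : ℕ) (ts : Fin k → NTerm F ar) (u recc : NTerm F ar) : ℕ → NTerm F ar := fun n =>
  if h : n < k then ts ⟨n, h⟩
  else if n = k then u
  else if n = k + 1 then recc
  else NTerm.param n

/-- Defining equations `D(f̂)` for the numeric defined symbols: for `f̂` of arity `α + 1`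
(`α = ar f̂`), `base f̂ = t_B` uses only the parameters `0,…,α-1` (standing for `n₁,…,n_α`) and
`step f̂ = t_S` uses only the parameters `0,…,α+1`, where parameter `α` stands for `m` and
parameter `α+1` stands for the placeholder `k` of the recursive call
`f̂(n₁,…,n_α,m)`. -/
structure NumDefs (F : Type) (ar : F → ℕ) where
  base : F → NTerm F ar
  step : F → NTerm F ar

/-- Wellformedness of the numeric defining equations with respect to the order `prec` on the
defined symbols: parameter conditions and the condition that all defined symbols occurring in
`t_B, t_S` are `prec`-smaller than `f̂`. -/
structure GoodNumDefs (prec : F → F → Prop) (D : NumDefs F ar) : Prop where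
  base_params : ∀ f n, (D.base f).HasParam n → n < ar f
  step_params : ∀ f n, (D.step f).HasParam n → n < ar f + 2
  base_symbs : ∀ f g, (D.base f).HasSymb g → prec g f
  step_symbs : ∀ f g, (D.step f).HasSymb g → prec g f

end Schematic
namespace Schematic

variable {F : Type} {ar : F → ℕ}

/-- The one-step rewrite relation `→_ω` generated by the rewrite system `R(F̂_ω)`,
obtained by orienting the defining equations from left to right; the rules are applicable
under arbitrary instantiation of the parameters and inside any term context. -/
inductive NStep (D : NumDefs F ar) : NTerm F ar → NTerm F ar → Prop where
  | baseRule (f : F) (ts : Fin (ar f) → NTerm F ar) :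
      NStep D (NTerm.defd f (Fin.snoc ts NTerm.zero)) ((D.base f).subst (cutSub (ar f) ts))
  | stepRule (f : F) (ts : Fin (ar f) → NTerm F ar) (u : NTerm F ar) :
      NStep D (NTerm.defd f (Fin.snoc ts (NTerm.succ u)))
        ((D.step f).subst (stepSub (ar f) ts u (NTerm.defd f (Fin.snoc ts u))))
  | succCong {t t' : NTerm F ar} : NStep D t t' → NStep D (NTerm.succ t) (NTerm.succ t')
  | argCong (f : F) (ts ts' : Fin (ar f + 1) → NTerm F ar) (i : Fin (ar f + 1)) :
      NStep D (ts i) (ts' i) → (∀ j, j ≠ i → ts j = ts' j) →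
      NStep D (NTerm.defd f ts) (NTerm.defd f ts')

end Schematic

/-! The defining equations have a standard model `interp` (well-founded recursion on `≺`,
primitive recursion in the last argument), and rewriting preserves values in it, so a term
reaches at most one numeral. Conversely, by induction on `≺` and then on the recursion argument,
a defined symbol applied to numerals rewrites to a numeral: both rules produce `t_B`, `t_S`
instantiated with numerals, which involve only smaller symbols. Hence every closed term reaches a
numeral. Finally, rewriting keeps terms closed, and a closed normal form is a numeral. -/

namespace Schematic

variable {F : Type} {ar : F → ℕ}

namespace NTerm

def Closed (t : NTerm F ar) : Prop := ∀ n, ¬ t.HasParam n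

def eval (I : ∀ f : F, (Fin (ar f + 1) → ℕ) → ℕ) (σ : ℕ → ℕ) : NTerm F ar → ℕ
  | zero => 0
  | param n => σ n
  | succ t => t.eval I σ + 1
  | defd f ts => I f fun i => (ts i).eval I σ

variable {I I' : ∀ f : F, (Fin (ar f + 1) → ℕ) → ℕ} {σ σ' : ℕ → ℕ}

theorem eval_congr_interp :
    ∀ {t : NTerm F ar}, (∀ g, t.HasSymb g → I g = I' g) → t.eval I σ = t.eval I' σ
  | zero, _ => rfl
  | param _, _ => rfl
  | succ t, h => congrArg (· + 1) (eval_congr_interp (t := t) h)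
  | defd f ts, h => by
      simp only [eval, h f (Or.inl rfl)]
      congr 1
      funext i
      exact eval_congr_interp fun g hg => h g (Or.inr ⟨i, hg⟩)

theorem eval_congr_valuation :
    ∀ {t : NTerm F ar}, (∀ n, t.HasParam n → σ n = σ' n) → t.eval I σ = t.eval I σ'
  | zero, _ => rfl
  | param n, h => h n rfl
  | succ t, h => congrArg (· + 1) (eval_congr_valuation (t := t) h)
  | defd f ts, h => by
      simp only [eval]
      congr 1
      funext i
      exact eval_congr_valuation fun n hn => h n ⟨i, hn⟩

theorem eval_subst (τ : ℕ → NTerm F ar) :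
    ∀ t : NTerm F ar, (t.subst τ).eval I σ = t.eval I fun n => (τ n).eval I σ
  | zero => rfl
  | param _ => rfl
  | succ t => congrArg (· + 1) (eval_subst τ t)
  | defd f ts => by
      simp only [subst, eval]
      congr 1
      funext i
      exact eval_subst τ (ts i)

@[simp]
theorem eval_ofNat (β : ℕ) : (ofNat F ar β).eval I σ = β := by
  induction β with
  | zero => rfl
  | succ β ih => simp [ofNat, eval, ih]

theorem closed_ofNat (β : ℕ) : (ofNat F ar β).Closed := by
  induction β with
  | zero => exact fun _ h => h
  | succ β ih => exact ih

theorem closed_defd_snoc {f : F} {ts : Fin (ar f) → NTerm F ar} {x : NTerm F ar} :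
    (defd f (Fin.snoc ts x)).Closed ↔ (∀ i, (ts i).Closed) ∧ x.Closed := by
  simp only [Closed, HasParam, not_exists, Fin.forall_fin_succ', Fin.snoc_castSucc,
    Fin.snoc_last]
  exact ⟨fun h => ⟨fun i n => h n |>.1 i, fun n => h n |>.2⟩,
    fun h n => ⟨fun i => h.1 i n, h.2 n⟩⟩

theorem closed_subst {τ : ℕ → NTerm F ar} :
    ∀ {t : NTerm F ar}, (∀ m, t.HasParam m → (τ m).Closed) → (t.subst τ).Closed
  | zero, _ => fun _ h => h
  | param m, h => h m rfl
  | succ t, h => closed_subst (t := t) h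
  | defd _ ts, h => fun n ⟨i, hi⟩ => closed_subst (t := ts i) (fun m hm => h m ⟨i, hm⟩) n hi

end NTerm

open NTerm

theorem cutSub_cases {P : NTerm F ar → Prop} {k n : ℕ} {ts : Fin k → NTerm F ar}
    (hts : ∀ i, P (ts i)) (hn : n < k) : P (cutSub k ts n) := by
  simpa [cutSub, hn] using hts ⟨n, hn⟩

theorem stepSub_cases {P : NTerm F ar → Prop} {k n : ℕ} {ts : Fin k → NTerm F ar}
    {u r : NTerm F ar} (hts : ∀ i, P (ts i)) (hu : P u) (hr : P r) (hn : n < k + 2) :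
    P (stepSub k ts u r n) := by
  unfold stepSub
  split_ifs
  exacts [hts _, hu, hr, by omega]

def cutVal (k : ℕ) (vs : Fin k → ℕ) : ℕ → ℕ := fun n =>
  if h : n < k then vs ⟨n, h⟩ else 0

def stepVal (k : ℕ) (vs : Fin k → ℕ) (m r : ℕ) : ℕ → ℕ := fun n =>
  if h : n < k then vs ⟨n, h⟩ else if n = k then m else if n = k + 1 then r else 0

theorem eval_cutSub {I : ∀ f : F, (Fin (ar f + 1) → ℕ) → ℕ} {σ : ℕ → ℕ} {k n : ℕ}
    {ts : Fin k → NTerm F ar} (hn : n < k) :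
    (cutSub k ts n).eval I σ = cutVal k (fun i => (ts i).eval I σ) n := by
  simp [cutSub, cutVal, hn]

theorem eval_stepSub {I : ∀ f : F, (Fin (ar f + 1) → ℕ) → ℕ} {σ : ℕ → ℕ} {k n : ℕ}
    {ts : Fin k → NTerm F ar} {u r : NTerm F ar} (hn : n < k + 2) :
    (stepSub k ts u r n).eval I σ =
      stepVal k (fun i => (ts i).eval I σ) (u.eval I σ) (r.eval I σ) n := by
  unfold stepSub stepVal
  split_ifs <;> first | rfl | omega

section Interp

variable (prec : F → F → Prop) (hwf : WellFounded prec) (D : NumDefs F ar)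

open Classical in
noncomputable def interp : ∀ f : F, (Fin (ar f + 1) → ℕ) → ℕ :=
  hwf.fix fun f ih args =>
    -- symbols not below `f` get the junk value `0`; by `GoodNumDefs` they do not occur
    let I : ∀ g : F, (Fin (ar g + 1) → ℕ) → ℕ := fun g => if h : prec g f then ih g h else 0
    Nat.rec ((D.base f).eval I (cutVal (ar f) (Fin.init args)))
      (fun m r => (D.step f).eval I (stepVal (ar f) (Fin.init args) m r))
      (args (Fin.last (ar f)))

variable {prec hwf D}

theorem interp_snoc_zero (hD : GoodNumDefs prec D) (f : F) (vs : Fin (ar f) → ℕ) :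
    interp prec hwf D f (Fin.snoc vs 0) =
      (D.base f).eval (interp prec hwf D) (cutVal (ar f) vs) := by
  rw [interp, hwf.fix_eq]
  simp only [Fin.snoc_last, Fin.init_snoc]
  exact eval_congr_interp fun g hg => dif_pos (hD.base_symbs f g hg)

theorem interp_snoc_succ (hD : GoodNumDefs prec D) (f : F) (vs : Fin (ar f) → ℕ) (m : ℕ) :
    interp prec hwf D f (Fin.snoc vs (m + 1)) =
      (D.step f).eval (interp prec hwf D)
        (stepVal (ar f) vs m (interp prec hwf D f (Fin.snoc vs m))) := by
  rw [interp, hwf.fix_eq]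
  simp only [Fin.snoc_last, Fin.init_snoc]
  exact eval_congr_interp fun g hg => dif_pos (hD.step_symbs f g hg)

end Interp

section Rewriting

variable {D : NumDefs F ar}

theorem not_nstep_ofNat (β : ℕ) : ¬ ∃ v, NStep D (ofNat F ar β) v := by
  induction β with
  | zero => rintro ⟨v, h⟩; cases h
  | succ β ih => rintro ⟨v, (h | h | h | h)⟩; exact ih ⟨_, h⟩

theorem reflTransGen_succ {a b : NTerm F ar} (h : Relation.ReflTransGen (NStep D) a b) :
    Relation.ReflTransGen (NStep D) (succ a) (succ b) :=
  h.lift succ fun _ _ => NStep.succCong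

theorem reflTransGen_defd_update {f : F} (ts : Fin (ar f + 1) → NTerm F ar) (i : Fin (ar f + 1))
    {a b : NTerm F ar} (h : Relation.ReflTransGen (NStep D) a b) :
    Relation.ReflTransGen (NStep D) (defd f (Function.update ts i a))
      (defd f (Function.update ts i b)) :=
  h.lift (fun x => defd f (Function.update ts i x)) fun _ _ hxy =>
    NStep.argCong f _ _ i (by simpa using hxy) fun j hj => by simp [hj]

theorem reflTransGen_defd {f : F} {ts ts' : Fin (ar f + 1) → NTerm F ar}
    (h : ∀ i, Relation.ReflTransGen (NStep D) (ts i) (ts' i)) :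
    Relation.ReflTransGen (NStep D) (defd f ts) (defd f ts') := by
  classical
  suffices ∀ s : Finset (Fin (ar f + 1)),
      Relation.ReflTransGen (NStep D) (defd f ts) (defd f (s.piecewise ts' ts)) by
    simpa using this Finset.univ
  intro s
  induction s using Finset.induction_on with
  | empty => simpa using Relation.ReflTransGen.refl
  | insert i s hi ih =>
      have hstep := reflTransGen_defd_update (D := D) (s.piecewise ts' ts) i (h i)
      rw [Function.update_eq_self_iff.mpr (s.piecewise_eq_of_notMem _ _ hi).symm] at hstep
      rw [Finset.piecewise_insert]
      exact ih.trans hstep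

theorem reflTransGen_subst {τ τ' : ℕ → NTerm F ar}
    (h : ∀ n, Relation.ReflTransGen (NStep D) (τ n) (τ' n)) :
    ∀ t : NTerm F ar, Relation.ReflTransGen (NStep D) (t.subst τ) (t.subst τ')
  | zero => .refl
  | param n => h n
  | succ t => reflTransGen_succ (reflTransGen_subst h t)
  | defd _ ts => reflTransGen_defd fun i => reflTransGen_subst h (ts i)

variable (D) in
def ReducesToNumeral (t : NTerm F ar) : Prop :=
  ∃ β, Relation.ReflTransGen (NStep D) t (ofNat F ar β)

theorem reducesToNumeral_subst {C : F → Prop}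
    (hC : ∀ f, C f → ∀ βs : Fin (ar f + 1) → ℕ,
      ReducesToNumeral D (defd f fun i => ofNat F ar (βs i)))
    {τ : ℕ → NTerm F ar} :
    ∀ t : NTerm F ar, (∀ m, t.HasParam m → ∃ β, τ m = ofNat F ar β) →
      (∀ g, t.HasSymb g → C g) → ReducesToNumeral D (t.subst τ)
  | zero, _, _ => ⟨0, .refl⟩
  | param m, hτ, _ => by
      obtain ⟨β, hβ⟩ := hτ m rfl
      exact ⟨β, hβ ▸ .refl⟩
  | succ t, hτ, hs => by
      obtain ⟨β, hβ⟩ := reducesToNumeral_subst hC t hτ hs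
      exact ⟨β + 1, reflTransGen_succ hβ⟩
  | defd f ts, hτ, hs => by
      choose βs hβs using fun i => reducesToNumeral_subst hC (ts i)
        (fun m hm => hτ m ⟨i, hm⟩) (fun g hg => hs g (Or.inr ⟨i, hg⟩))
      obtain ⟨γ, hγ⟩ := hC f (hs f (Or.inl rfl)) βs
      exact ⟨γ, (reflTransGen_defd hβs).trans hγ⟩

theorem reducesToNumeral_defd_ofNat {prec : F → F → Prop} (hwf : WellFounded prec)
    (hD : GoodNumDefs prec D) (f : F) :
    ∀ βs : Fin (ar f + 1) → ℕ, ReducesToNumeral D (defd f fun i => ofNat F ar (βs i)) := by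
  induction f using hwf.induction with
  | _ f ih =>
  intro βs
  induction βs using Fin.snocCases with
  | _ βs β =>
  change ReducesToNumeral D (defd f (ofNat F ar ∘ Fin.snoc βs β))
  rw [Fin.comp_snoc]
  set nums := ofNat F ar ∘ βs
  let IsNum : NTerm F ar → Prop := fun s => ∃ γ, s = ofNat F ar γ
  have hnums : ∀ i, IsNum (nums i) := fun i => ⟨βs i, rfl⟩
  induction β with
  | zero =>
      obtain ⟨γ, hγ⟩ := reducesToNumeral_subst ih (τ := cutSub (ar f) nums) (D.base f)
        (fun m hm => cutSub_cases (P := IsNum) hnums (hD.base_params f m hm))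
        (hD.base_symbs f)
      exact ⟨γ, .head (.baseRule f nums) hγ⟩
  | succ β ihβ =>
      obtain ⟨r, hr⟩ := ihβ
      have hrec : ∀ n, Relation.ReflTransGen (NStep D)
          (stepSub (ar f) nums (ofNat F ar β) (defd f (Fin.snoc nums (ofNat F ar β))) n)
          (stepSub (ar f) nums (ofNat F ar β) (ofNat F ar r) n) := fun n => by
        unfold stepSub
        split_ifs
        exacts [.refl, .refl, hr, .refl]
      obtain ⟨γ, hγ⟩ := reducesToNumeral_subst ih
        (τ := stepSub (ar f) nums (ofNat F ar β) (ofNat F ar r)) (D.step f)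
        (fun m hm => stepSub_cases (P := IsNum) hnums ⟨β, rfl⟩ ⟨r, rfl⟩ (hD.step_params f m hm))
        (hD.step_symbs f)
      exact ⟨γ, .head (.stepRule f nums _) ((reflTransGen_subst hrec _).trans hγ)⟩

end Rewriting

section Invariants

variable {prec : F → F → Prop} {D : NumDefs F ar} (hD : GoodNumDefs prec D)
include hD

theorem eval_eq_of_nstep (hwf : WellFounded prec) {a b : NTerm F ar} (h : NStep D a b)
    (σ : ℕ → ℕ) : a.eval (interp prec hwf D) σ = b.eval (interp prec hwf D) σ := by
  induction h with
  | baseRule f ts =>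
      change interp prec hwf D f (eval (interp prec hwf D) σ ∘ Fin.snoc ts zero) = _
      rw [Fin.comp_snoc, eval, interp_snoc_zero hD, eval_subst]
      exact eval_congr_valuation fun n hn => (eval_cutSub (hD.base_params f n hn)).symm
  | stepRule f ts u =>
      change interp prec hwf D f (eval (interp prec hwf D) σ ∘ Fin.snoc ts (succ u)) = _
      rw [Fin.comp_snoc, eval, interp_snoc_succ hD, eval_subst]
      refine eval_congr_valuation fun n hn => ?_
      rw [eval_stepSub (hD.step_params f n hn), eval]
      change _ = stepVal _ _ _ (interp prec hwf D f (eval (interp prec hwf D) σ ∘ Fin.snoc ts u)) n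
      rw [Fin.comp_snoc]
      rfl
  | succCong _ ih => exact congrArg (· + 1) ih
  | argCong f ts ts' i _ heq ih =>
      simp only [eval]
      congr 1
      funext j
      by_cases hj : j = i
      · exact hj ▸ ih
      · rw [heq j hj]

theorem eq_of_reflTransGen_ofNat (hwf : WellFounded prec) {t : NTerm F ar} {β γ : ℕ}
    (hβ : Relation.ReflTransGen (NStep D) t (ofNat F ar β))
    (hγ : Relation.ReflTransGen (NStep D) t (ofNat F ar γ)) : β = γ := by
  have hval : ∀ {u}, Relation.ReflTransGen (NStep D) t u →
      t.eval (interp prec hwf D) 0 = u.eval (interp prec hwf D) 0 := fun h =>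
    h.rec rfl fun _ hs ih => ih.trans (eval_eq_of_nstep hD hwf hs 0)
  simpa using (hval hβ).symm.trans (hval hγ)

theorem NStep.closed {a b : NTerm F ar} (h : NStep D a b) (ha : a.Closed) : b.Closed := by
  induction h with
  | baseRule f ts =>
      exact closed_subst fun m hm =>
        cutSub_cases (closed_defd_snoc.mp ha).1 (hD.base_params f m hm)
  | stepRule f ts u =>
      obtain ⟨hts, hu⟩ := closed_defd_snoc.mp ha
      exact closed_subst fun m hm =>
        stepSub_cases hts hu (closed_defd_snoc.mpr ⟨hts, hu⟩) (hD.step_params f m hm)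
  | succCong _ ih => exact ih ha
  | argCong f ts ts' i _ heq ih =>
      rintro n ⟨j, hj⟩
      by_cases hji : j = i
      · subst hji
        exact ih (fun m hm => ha m ⟨j, hm⟩) n hj
      · exact ha n ⟨j, heq j hji ▸ hj⟩

theorem closed_of_reflTransGen {a b : NTerm F ar} (h : Relation.ReflTransGen (NStep D) a b)
    (ha : a.Closed) : b.Closed :=
  h.rec ha fun _ hs ih => hs.closed hD ih

end Invariants

theorem exists_eq_ofNat_of_normal {D : NumDefs F ar} :
    ∀ {t : NTerm F ar}, t.Closed → (¬ ∃ v, NStep D t v) → ∃ β, t = ofNat F ar β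
  | zero, _, _ => ⟨0, rfl⟩
  | param n, hc, _ => absurd rfl (hc n)
  | succ t, hc, hnf => by
      obtain ⟨β, rfl⟩ := exists_eq_ofNat_of_normal (t := t) hc fun ⟨v, hv⟩ =>
        hnf ⟨_, .succCong hv⟩
      exact ⟨β + 1, rfl⟩
  | defd f ts, hc, hnf => by
      -- an application whose last argument is a numeral is a redex
      obtain ⟨β, hβ⟩ := exists_eq_ofNat_of_normal (D := D) (t := ts (Fin.last _))
        (fun n hn => hc n ⟨_, hn⟩) fun ⟨v, hv⟩ =>
          hnf ⟨_, .argCong f ts (Function.update ts (Fin.last _) v) (Fin.last _)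
            (by simpa using hv) fun j hj => by simp [hj]⟩
      rw [← Fin.snoc_init_self ts, hβ] at hnf
      cases β with
      | zero => exact (hnf ⟨_, .baseRule f _⟩).elim
      | succ β => exact (hnf ⟨_, .stepRule f _ _⟩).elim

end Schematic

open Schematic

theorem statement1_general (F : Type) (ar : F → ℕ) (prec : F → F → Prop)
    (hwf : WellFounded prec)
    (D : NumDefs F ar) (hD : GoodNumDefs prec D)
    (t : NTerm F ar) (σ : ℕ → ℕ) :
    ∃ β : ℕ,
      Relation.ReflTransGen (NStep D) (t.subst fun n => NTerm.ofNat F ar (σ n))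
        (NTerm.ofNat F ar β) ∧
      (¬ ∃ v, NStep D (NTerm.ofNat F ar β) v) ∧
      ∀ u, Relation.ReflTransGen (NStep D) (t.subst fun n => NTerm.ofNat F ar (σ n)) u →
        (¬ ∃ v, NStep D u v) → u = NTerm.ofNat F ar β := by
  obtain ⟨β, hβ⟩ : ReducesToNumeral D (t.subst fun n => NTerm.ofNat F ar (σ n)) :=
    reducesToNumeral_subst (C := fun _ => True)
      (fun f _ => reducesToNumeral_defd_ofNat hwf hD f) t (fun m _ => ⟨σ m, rfl⟩)
      (fun _ _ => trivial)
  refine ⟨β, hβ, not_nstep_ofNat β, fun u hu hnf => ?_⟩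
  have hclosed : u.Closed :=
    closed_of_reflTransGen hD hu (NTerm.closed_subst fun m _ => NTerm.closed_ofNat (σ m))
  obtain ⟨γ, rfl⟩ := exists_eq_ofNat_of_normal hclosed hnf
  rw [eq_of_reflTransGen_ofNat hD hwf hβ hu]

/-- For every numeric term `t ∈ T^ω` and every parameter assignment `σ`
(a function from parameters to numerals), the term `σ(t)` has a unique normal form under the
rewrite system `R(F̂_ω)`, and this normal form is a numeral `s^β(0̄)`. -/
theorem statement1 (F : Type) (ar : F → ℕ) (prec : F → F → Prop)
    (hirr : ∀ f, ¬ prec f f) (htrans : Transitive prec) (hwf : WellFounded prec)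
    (D : NumDefs F ar) (hD : GoodNumDefs prec D)
    (t : NTerm F ar) (σ : ℕ → ℕ) :
    ∃ β : ℕ,
      Relation.ReflTransGen (NStep D) (t.subst fun n => NTerm.ofNat F ar (σ n))
        (NTerm.ofNat F ar β) ∧
      (¬ ∃ v, NStep D (NTerm.ofNat F ar β) v) ∧
      ∀ u, Relation.ReflTransGen (NStep D) (t.subst fun n => NTerm.ofNat F ar (σ n)) u →
        (¬ ∃ v, NStep D u v) → u = NTerm.ofNat F ar β :=
  statement1_general F ar prec hwf D hD t σ
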